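/- Let R be a G-graded ring. The girth of the intersection graph of graded left ideals Gr_G(R) is either 3 or infinite (Gr_G(R) has no cycles). -/

import Mathlib

variable {G R : Type*} [AddGroup G] [DecidableEq G] [Ring R]

/-- The set of proper nontrivial `G`-graded left ideals of `R`. -/
def hV (𝒜 : G → AddSubgroup R) [GradedRing 𝒜] : Set (Ideal R) :=
  {I | I ≠ ⊥ ∧ I ≠ ⊤ ∧ Ideal.IsHomogeneous 𝒜 I}

/-- The intersection graph on a set of (left) ideals: two distinct ideals are
adjacent iff their intersection is nonzero. -/
def interGraph (V : Set (Ideal R)) : SimpleGraph V where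
  Adj I J := I ≠ J ∧ (I : Ideal R) ⊓ (J : Ideal R) ≠ ⊥
  symm := ⟨fun I J ⟨h1, h2⟩ => ⟨h1.symm, by rwa [inf_comm] at h2⟩⟩
  loopless := ⟨fun I ⟨h1, _⟩ => h1 rfl⟩

/-!
If `I ⊓ J ≠ 0` for distinct graded ideals `I`, `J`, then either `I ⊓ J` is a third
vertex adjacent to both, or one of them contains the other, say `I ⊆ J`; then every other
neighbour `K` of `I` satisfies `0 ≠ K ⊓ I ⊆ K ⊓ J`, so `I, J, K` is a triangle. A cycle supplies
such a `K` on either side of any of its edges.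
-/

namespace SimpleGraph

variable {V : Type*} {G : SimpleGraph V}

lemma egirth_le_three_of_adj {a b c : V} (hab : G.Adj a b) (hbc : G.Adj b c) (hca : G.Adj c a) :
    G.egirth ≤ 3 := by
  have hcycle : (Walk.cons hab (.cons hbc (.cons hca .nil))).IsCycle := by
    simp [Walk.cons_isCycle_iff, hab.ne, hbc.ne, hab.ne.symm, hca.ne, hca.ne.symm]
  exact egirth_le_length hcycle

lemma Walk.IsCycle.exists_adj_adj_adj {u : V} {p : G.Walk u u} (hp : p.IsCycle) :
    ∃ a b c d, G.Adj a b ∧ G.Adj b c ∧ G.Adj c d ∧ a ≠ c ∧ b ≠ d := by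
  have hlen := hp.three_le_length
  exact ⟨p.getVert 0, p.getVert 1, p.getVert 2, p.getVert 3,
    p.adj_getVert_succ (by lia), p.adj_getVert_succ (by lia), p.adj_getVert_succ (by lia),
    hp.getVert_sub_one_ne_getVert_add_one (i := 1) (by lia),
    hp.getVert_sub_one_ne_getVert_add_one (i := 2) (by lia)⟩

end SimpleGraph

section interGraph

variable {V : Set (Ideal R)}

lemma interGraph_adj_of_le {I J K : V} (hIJ : (I : Ideal R) ≤ J) (hKI : (interGraph V).Adj K I)
    (hKJ : K ≠ J) : (interGraph V).Adj K J :=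
  ⟨hKJ, fun h => hKI.2 (le_bot_iff.1 (h ▸ inf_le_inf_left _ hIJ))⟩

lemma interGraph_adj_of_lt {I K : V} (hKI : (K : Ideal R) < I) (hK : (K : Ideal R) ≠ ⊥) :
    (interGraph V).Adj I K :=
  ⟨fun h => hKI.ne (congrArg Subtype.val h).symm, by rwa [inf_eq_right.2 hKI.le]⟩

lemma interGraph_exists_triangle
    (hinf : ∀ I ∈ V, ∀ J ∈ V, I ⊓ J ≠ ⊥ → I ⊓ J ∈ V) {a b c d : V}
    (hab : (interGraph V).Adj a b) (hbc : (interGraph V).Adj b c) (hcd : (interGraph V).Adj c d)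
    (hac : a ≠ c) (hbd : b ≠ d) :
    ∃ x y z, (interGraph V).Adj x y ∧ (interGraph V).Adj y z ∧ (interGraph V).Adj z x := by
  by_cases hb : (b : Ideal R) ≤ c
  · exact ⟨a, b, c, hab, hbc, (interGraph_adj_of_le hb hab hac).symm⟩
  by_cases hc : (c : Ideal R) ≤ b
  · exact ⟨b, c, d, hbc, hcd, interGraph_adj_of_le hc hcd.symm hbd.symm⟩
  let m : V := ⟨b ⊓ c, hinf b b.2 c c.2 hbc.2⟩
  exact ⟨b, c, m, hbc, interGraph_adj_of_lt (inf_lt_right.2 hc) hbc.2,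
    (interGraph_adj_of_lt (inf_lt_left.2 hb) hbc.2).symm⟩

end interGraph

lemma inf_mem_hV (𝒜 : G → AddSubgroup R) [GradedRing 𝒜] {I J : Ideal R} (hI : I ∈ hV 𝒜)
    (hJ : J ∈ hV 𝒜) (hIJ : I ⊓ J ≠ ⊥) : I ⊓ J ∈ hV 𝒜 :=
  ⟨hIJ, ne_top_of_le_ne_top hI.2.1 inf_le_left, hI.2.2.inf hJ.2.2⟩

/-- The girth of the intersection graph of graded left ideals is
either 3 or infinite (no cycles). -/
theorem stmt9 (𝒜 : G → AddSubgroup R) [GradedRing 𝒜] :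
    (interGraph (hV 𝒜)).egirth = 3 ∨ (interGraph (hV 𝒜)).egirth = ⊤ := by
  by_cases hacyclic : (interGraph (hV 𝒜)).IsAcyclic
  · exact Or.inr hacyclic.egirth_eq_top
  obtain ⟨_, p, hp, -⟩ := SimpleGraph.exists_egirth_eq_length.mpr hacyclic
  obtain ⟨a, b, c, d, hab, hbc, hcd, hac, hbd⟩ := hp.exists_adj_adj_adj
  obtain ⟨x, y, z, hxy, hyz, hzx⟩ :=
    interGraph_exists_triangle (fun I hI J hJ => inf_mem_hV 𝒜 hI hJ) hab hbc hcd hac hbd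
  exact Or.inl (le_antisymm (SimpleGraph.egirth_le_three_of_adj hxy hyz hzx)
    SimpleGraph.three_le_egirth)
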